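/- If Φ is a finite unit flow from A to B (Φ(Ω×Ω)<∞), then the hitting time of B by the associated Markov chain has finite expectation, E^Φ[τ_B^Y] ≤ Φ(Ω×Ω) < ∞, and in particular τ_B^Y < ∞ P^Φ-almost surely. -/

import Mathlib

open MeasureTheory ProbabilityTheory ENNReal Set Filter
open scoped Classical

noncomputable section

variable {Ω : Type*}

/-- The Dirichlet form `E(h) = (1/2) ∫ (h(y)-h(x))² K(dx,dy)` (in `ℝ≥0∞`). -/
def dirichletForm [MeasurableSpace Ω] (K : Measure (Ω × Ω)) (h : Ω → ℝ) : ℝ≥0∞ :=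
  2⁻¹ * ∫⁻ p, ENNReal.ofReal ((h p.2 - h p.1) ^ 2) ∂K

/-- The class `V_AB` of test potentials. -/
def VAB [MeasurableSpace Ω] (A B : Set Ω) (K : Measure (Ω × Ω)) : Set (Ω → ℝ) :=
  {h | Measurable h ∧ (∀ x ∈ A, h x = 1) ∧ (∀ x ∈ B, h x = 0) ∧
    (∀ x, 0 ≤ h x ∧ h x ≤ 1) ∧ dirichletForm K h < ⊤}

/-- The capacity `Cap(A,B)`, defined by the Dirichlet principle. -/
def Cap [MeasurableSpace Ω] (A B : Set Ω) (K : Measure (Ω × Ω)) : ℝ≥0∞ :=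
  ⨅ h ∈ VAB A B K, dirichletForm K h

/-- Finite paths `(γ₀, …, γ_{n+1})` with at least one edge. -/
abbrev PathSpace (Ω : Type*) := Σ n : ℕ, Fin (n + 2) → Ω

/-- The set `Γ_AB` of finite paths from `A` to `B` not touching `B` before the end. -/
def GammaAB (A B : Set Ω) : Set (PathSpace Ω) :=
  {γ | γ.2 0 ∈ A ∧ γ.2 (Fin.last (γ.1 + 1)) ∈ B ∧
    ∀ i : Fin (γ.1 + 2), 0 < (i : ℕ) → (i : ℕ) < γ.1 + 1 → γ.2 i ∉ B}

/-- Sum of `g` over the (directed) edges of the path `γ`. -/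
def pathSum (g : Ω × Ω → ℝ≥0∞) (γ : PathSpace Ω) : ℝ≥0∞ :=
  ∑ j : Fin (γ.1 + 1), g (γ.2 j.castSucc, γ.2 j.succ)

/-- `Φ` is the edge measure `Φ_P` of the path measure `P`. -/
def IsEdgeMeasure [MeasurableSpace Ω] (P : Measure (PathSpace Ω)) (Φ : Measure (Ω × Ω)) : Prop :=
  ∀ g : Ω × Ω → ℝ≥0∞, Measurable g → ∫⁻ p, g p ∂Φ = ∫⁻ γ, pathSum g γ ∂P

/-- `Φ` is a unit flow from `A` to `B`. -/
def IsUnitFlow [MeasurableSpace Ω] (A B : Set Ω) (Φ : Measure (Ω × Ω)) : Prop :=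
  SigmaFinite Φ ∧
  Φ (A ×ˢ univ) = 1 ∧ Φ (univ ×ˢ A) = 0 ∧
  Φ (univ ×ˢ B) = 1 ∧ Φ (B ×ˢ univ) = 0 ∧
  (∀ C : Set Ω, MeasurableSet C → C ⊆ (A ∪ B)ᶜ → Φ (C ×ˢ univ) = Φ (univ ×ˢ C)) ∧
  ∃ χ : Set (Ω × Ω), MeasurableSet χ ∧ Φ χᶜ = 0 ∧ ∀ x y : Ω, (x, y) ∈ χ → (y, x) ∉ χ

/-- `χ` contains no loops. -/
def NoLoops (χ : Set (Ω × Ω)) : Prop :=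
  ∀ (n : ℕ) (γ : Fin (n + 2) → Ω), γ (Fin.last (n + 1)) = γ 0 →
    ∃ j : Fin (n + 1), (γ j.castSucc, γ j.succ) ∉ χ

/-- `Φ` is a loop-free unit flow from `A` to `B`. -/
def IsLoopFreeUnitFlow [MeasurableSpace Ω] (A B : Set Ω) (Φ : Measure (Ω × Ω)) : Prop :=
  IsUnitFlow A B Φ ∧
  ∃ χ : Set (Ω × Ω), MeasurableSet χ ∧ Φ χᶜ = 0 ∧
    (∀ x y : Ω, (x, y) ∈ χ → (y, x) ∉ χ) ∧ NoLoops χ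

/-- `Φ(dx,dy) = ν(dx) ℓ(x,dy)` with `ν = Φ.fst` the left marginal. -/
def Disintegrates [MeasurableSpace Ω] (Φ : Measure (Ω × Ω)) (ℓ : Kernel Ω Ω) : Prop :=
  ∀ g : Ω × Ω → ℝ≥0∞, Measurable g →
    ∫⁻ p, g p ∂Φ = ∫⁻ x, ∫⁻ y, g (x, y) ∂(ℓ x) ∂Φ.fst

/-- Finite-dimensional distributions of the Markov chain with initial law `μ0` and kernel `ℓ`. -/
def fdd [MeasurableSpace Ω] (μ0 : Measure Ω) (ℓ : Kernel Ω Ω) :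
    (n : ℕ) → Measure (Fin (n + 1) → Ω)
  | 0 => μ0.map (fun x => fun _ => x)
  | n + 1 => (fdd μ0 ℓ n).bind (fun p => (ℓ (p (Fin.last n))).map (Fin.snoc p))

/-- `P` is the law of the Markov chain with initial law `μ0` and transition kernel `ℓ`. -/
def IsChainLaw [MeasurableSpace Ω] (μ0 : Measure Ω) (ℓ : Kernel Ω Ω)
    (P : Measure (ℕ → Ω)) : Prop :=
  IsProbabilityMeasure P ∧
  ∀ n : ℕ, P.map (fun ω (i : Fin (n + 1)) => ω (i : ℕ)) = fdd μ0 ℓ n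

/-- `Σ_{n=1}^{τ_B} g(Y_{n-1}, Y_n)`, where `τ_B = min{n ≥ 1 : Y_n ∈ B}`. -/
def stoppedSum (B : Set Ω) (g : Ω × Ω → ℝ≥0∞) (ω : ℕ → Ω) : ℝ≥0∞ :=
  ∑' n : ℕ, if ∀ m, 1 ≤ m → m ≤ n → ω m ∉ B then g (ω n, ω (n + 1)) else 0

/-- The event `τ_B < ∞`. -/
def HitsB (B : Set Ω) (ω : ℕ → Ω) : Prop := ∃ n : ℕ, 1 ≤ n ∧ ω n ∈ B

/-- `τ_B`, viewed in `ℝ≥0∞`. -/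
def hitTimeE (B : Set Ω) (ω : ℕ → Ω) : ℝ≥0∞ :=
  ∑' n : ℕ, if ∀ m, 1 ≤ m → m ≤ n → ω m ∉ B then 1 else 0

/-- The Berman-Konsowa functional `E^Φ[ (Σ_{n=1}^{τ_B} g(Y_{n-1},Y_n))⁻¹ ]`, with the
reciprocal taken to be `0` on `{τ_B = ∞}` (and automatically `0` when the sum is infinite). -/
def bkValue [MeasurableSpace Ω] (B : Set Ω) (g : Ω × Ω → ℝ≥0∞)
    (P : Measure (ℕ → Ω)) : ℝ≥0∞ :=
  ∫⁻ ω, (if HitsB B ω then (stoppedSum B g ω)⁻¹ else 0) ∂P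

end

/-!
Write `ν = Φ.fst` and let `ρₙ` be the law of `Yₙ` on the event that `Y₁, …, Yₙ` avoid `B`, so
that `E[τ_B] = ∑ₙ ρₙ(Ω)`, `ρ₀ = ν|_A` and `ρₙ₊₁(C) = ∫ ℓ(x, C ∖ B) ρₙ(dx)`. Since `νℓ = Φ.snd`,
flow conservation off `A ∪ B` and `Φ(Ω × A) = 0` make `ν` excessive for this killed chain:
`ν|_A + νℓ(· ∖ B) ≤ ν`. By induction `∑_{k<n} ρₖ ≤ ν`, hence `E[τ_B] ≤ ν(Ω) = Φ(Ω × Ω) < ∞`,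
and `τ_B` is finite almost surely.
-/

section UnitFlow

variable {Ω : Type*} [MeasurableSpace Ω] {A B : Set Ω} {Φ : Measure (Ω × Ω)}

lemma Disintegrates.lintegral_kernel_eq_snd {ℓ : Kernel Ω Ω} (hdis : Disintegrates Φ ℓ)
    {C : Set Ω} (hC : MeasurableSet C) : ∫⁻ x, ℓ x C ∂Φ.fst = Φ.snd C := by
  have h := hdis (fun p => C.indicator 1 p.2) ((measurable_one.indicator hC).comp measurable_snd)
  simp only [lintegral_indicator_one hC] at h
  rw [← h, ← lintegral_indicator_one hC, Measure.snd, lintegral_map (measurable_one.indicator hC)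
    measurable_snd]

lemma IsUnitFlow.snd_apply_source (hΦ : IsUnitFlow A B Φ) (hA : MeasurableSet A) :
    Φ.snd A = 0 := by
  obtain ⟨-, -, hin, -⟩ := hΦ
  rwa [Measure.snd_apply hA, ← univ_prod]

lemma IsUnitFlow.snd_apply_eq_fst_apply (hΦ : IsUnitFlow A B Φ) {D : Set Ω}
    (hD : MeasurableSet D) (hDAB : D ⊆ (A ∪ B)ᶜ) : Φ.snd D = Φ.fst D := by
  obtain ⟨-, -, -, -, -, hcons, -⟩ := hΦ
  rw [Measure.snd_apply hD, Measure.fst_apply hD, ← univ_prod, ← prod_univ, hcons D hD hDAB]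

lemma IsUnitFlow.restrict_add_lintegral_kernel_le {ℓ : Kernel Ω Ω} (hΦ : IsUnitFlow A B Φ)
    (hA : MeasurableSet A) (hB : MeasurableSet B) (hdis : Disintegrates Φ ℓ)
    {C : Set Ω} (hC : MeasurableSet C) :
    Φ.fst.restrict A C + ∫⁻ x, ℓ x (C ∩ Bᶜ) ∂Φ.fst ≤ Φ.fst C := by
  set D := C ∩ Aᶜ ∩ Bᶜ
  have hD : MeasurableSet D := (hC.inter hA.compl).inter hB.compl
  have hDAB : D ⊆ (A ∪ B)ᶜ := fun x hx => by
    simp only [D, mem_inter_iff, mem_compl_iff, mem_union] at hx ⊢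
    tauto
  have hin : Φ.snd (C ∩ Bᶜ) ≤ Φ.fst D :=
    calc Φ.snd (C ∩ Bᶜ) ≤ Φ.snd (A ∪ D) := measure_mono fun x hx => by
          by_cases hxA : x ∈ A
          · exact Or.inl hxA
          · exact Or.inr ⟨⟨hx.1, hxA⟩, hx.2⟩
      _ ≤ Φ.snd A + Φ.snd D := measure_union_le _ _
      _ = Φ.fst D := by rw [hΦ.snd_apply_source hA, zero_add, hΦ.snd_apply_eq_fst_apply hD hDAB]
  have hdisj : Disjoint (C ∩ A) D := disjoint_left.mpr fun _ hx1 hx2 => hx2.1.2 hx1.2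
  calc Φ.fst.restrict A C + ∫⁻ x, ℓ x (C ∩ Bᶜ) ∂Φ.fst
      ≤ Φ.fst (C ∩ A) + Φ.fst D := by
        rw [Measure.restrict_apply hC, hdis.lintegral_kernel_eq_snd (hC.inter hB.compl)]
        gcongr
    _ = Φ.fst (C ∩ A ∪ D) := (measure_union hdisj hD).symm
    _ ≤ Φ.fst C := measure_mono (union_subset inter_subset_left fun _ hx => hx.1.1)

end UnitFlow

section KilledChain

variable {Ω : Type*} {B : Set Ω}

def avoidsAfterZero (B : Set Ω) (n : ℕ) : Set (Fin (n + 1) → Ω) :=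
  {p | ∀ i : Fin (n + 1), 1 ≤ (i : ℕ) → p i ∉ B}

lemma snoc_mem_avoidsAfterZero_iff {n : ℕ} {p : Fin (n + 1) → Ω} {y : Ω} :
    (Fin.snoc p y : Fin (n + 2) → Ω) ∈ avoidsAfterZero B (n + 1) ↔
      p ∈ avoidsAfterZero B n ∧ y ∉ B := by
  simp [avoidsAfterZero, Fin.forall_fin_succ']

variable [MeasurableSpace Ω]

lemma measurableSet_avoidsAfterZero (hB : MeasurableSet B) (n : ℕ) :
    MeasurableSet (avoidsAfterZero B n) := by
  simp only [avoidsAfterZero, ofPred_forall]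
  exact .iInter fun i => .iInter fun _ => (hB.preimage (measurable_pi_apply i)).compl

noncomputable def killedMarginal (B : Set Ω) (μ0 : Measure Ω) (ℓ : Kernel Ω Ω) (n : ℕ) :
    Measure Ω :=
  ((fdd μ0 ℓ n).restrict (avoidsAfterZero B n)).map (fun p => p (Fin.last n))

lemma killedMarginal_apply_univ (B : Set Ω) (μ0 : Measure Ω) (ℓ : Kernel Ω Ω) (n : ℕ) :
    killedMarginal B μ0 ℓ n univ = fdd μ0 ℓ n (avoidsAfterZero B n) := by
  rw [killedMarginal, Measure.map_apply (measurable_pi_apply _) .univ, preimage_univ,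
    Measure.restrict_apply_univ]

lemma killedMarginal_zero (B : Set Ω) (μ0 : Measure Ω) (ℓ : Kernel Ω Ω) :
    killedMarginal B μ0 ℓ 0 = μ0 := by
  have hall : avoidsAfterZero B 0 = univ :=
    eq_univ_of_forall fun p i hi => absurd i.isLt (by omega)
  rw [killedMarginal, hall, Measure.restrict_univ, fdd,
    Measure.map_map (measurable_pi_apply _)
      (measurable_pi_lambda (fun x (_ : Fin 1) => x) fun _ => measurable_id)]
  exact Measure.map_id

lemma measurable_snoc (n : ℕ) :
    Measurable fun q : (Fin (n + 1) → Ω) × Ω => (Fin.snoc q.1 q.2 : Fin (n + 2) → Ω) := by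
  refine measurable_pi_lambda _ fun i => ?_
  induction i using Fin.lastCases with
  | last => simpa only [Fin.snoc_last] using measurable_snd
  | cast j =>
    simp only [Fin.snoc_castSucc]
    exact (measurable_pi_apply j).comp measurable_fst

lemma measurable_snoc_left {n : ℕ} (p : Fin (n + 1) → Ω) :
    Measurable (Fin.snoc (α := fun _ : Fin (n + 2) => Ω) p) :=
  (measurable_snoc n).comp measurable_prodMk_left

lemma measurable_map_snoc (ℓ : Kernel Ω Ω) [IsSFiniteKernel ℓ] (n : ℕ) :
    Measurable fun p : Fin (n + 1) → Ω =>
      (ℓ (p (Fin.last n))).map (Fin.snoc (α := fun _ : Fin (n + 2) => Ω) p) := by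
  refine Measure.measurable_of_measurable_coe _ fun s hs => ?_
  simp_rw [Measure.map_apply (measurable_snoc_left _) hs]
  exact Kernel.measurable_kernel_prodMk_left
    (κ := ℓ.comap (fun p : Fin (n + 1) → Ω => p (Fin.last n)) (measurable_pi_apply _))
    (measurable_snoc n hs)

lemma killedMarginal_succ_apply (hB : MeasurableSet B) (μ0 : Measure Ω) (ℓ : Kernel Ω Ω)
    [IsSFiniteKernel ℓ] (n : ℕ) {C : Set Ω} (hC : MeasurableSet C) :
    killedMarginal B μ0 ℓ (n + 1) C = ∫⁻ x, ℓ x (C ∩ Bᶜ) ∂killedMarginal B μ0 ℓ n := by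
  have hlast : Measurable fun p : Fin (n + 2) → Ω => p (Fin.last (n + 1)) :=
    measurable_pi_apply _
  have hS : MeasurableSet ((fun p => p (Fin.last (n + 1))) ⁻¹' C ∩ avoidsAfterZero B (n + 1)) :=
    (hlast hC).inter (measurableSet_avoidsAfterZero hB _)
  have hfiber : ∀ p : Fin (n + 1) → Ω,
      (Fin.snoc (α := fun _ : Fin (n + 2) => Ω) p) ⁻¹'
          ((fun p => p (Fin.last (n + 1))) ⁻¹' C ∩ avoidsAfterZero B (n + 1)) =
        if p ∈ avoidsAfterZero B n then C ∩ Bᶜ else ∅ := fun p => by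
    ext y
    split_ifs with hp <;> simp [snoc_mem_avoidsAfterZero_iff, hp]
  rw [killedMarginal, Measure.map_apply hlast hC, Measure.restrict_apply (hlast hC), fdd,
    Measure.bind_apply hS (measurable_map_snoc ℓ n).aemeasurable, killedMarginal,
    lintegral_map (Kernel.measurable_coe ℓ (hC.inter hB.compl)) (measurable_pi_apply _),
    ← lintegral_indicator (measurableSet_avoidsAfterZero hB n)]
  refine lintegral_congr fun p => ?_
  rw [Measure.map_apply (measurable_snoc_left p) hS, hfiber p]
  split_ifs with hp
  · rw [indicator_of_mem hp]
  · rw [indicator_of_notMem hp, measure_empty]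

lemma sum_killedMarginal_le (hB : MeasurableSet B) {μ0 ν : Measure Ω} {ℓ : Kernel Ω Ω}
    [IsSFiniteKernel ℓ]
    (hexc : ∀ C, MeasurableSet C → μ0 C + ∫⁻ x, ℓ x (C ∩ Bᶜ) ∂ν ≤ ν C) (n : ℕ) :
    ∑ k ∈ Finset.range n, killedMarginal B μ0 ℓ k ≤ ν := by
  induction n with
  | zero => simpa using Measure.zero_le ν
  | succ n ih =>
    refine Measure.le_iff.mpr fun C hC => ?_
    calc (∑ k ∈ Finset.range (n + 1), killedMarginal B μ0 ℓ k) C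
        = μ0 C + ∫⁻ x, ℓ x (C ∩ Bᶜ) ∂∑ k ∈ Finset.range n, killedMarginal B μ0 ℓ k := by
          simp only [Finset.sum_range_succ', Measure.coe_add, Measure.coe_finsetSum,
            Pi.add_apply, Finset.sum_apply, killedMarginal_zero, lintegral_finsetSum_measure,
            killedMarginal_succ_apply hB μ0 ℓ _ hC, add_comm]
      _ ≤ μ0 C + ∫⁻ x, ℓ x (C ∩ Bᶜ) ∂ν := by gcongr
      _ ≤ ν C := hexc C hC

end KilledChain

section HittingTime

variable {Ω : Type*} {B : Set Ω}

def survivesUntil (B : Set Ω) (n : ℕ) : Set (ℕ → Ω) :=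
  {ω | ∀ m, 1 ≤ m → m ≤ n → ω m ∉ B}

lemma hitTimeE_eq_tsum_indicator (B : Set Ω) (ω : ℕ → Ω) :
    hitTimeE B ω = ∑' n, (survivesUntil B n).indicator 1 ω := by
  simp only [hitTimeE, indicator_apply, survivesUntil, mem_ofPred_eq, Pi.one_apply]
  -- the two sides differ only in their `Decidable` instances
  congr!

lemma hitsB_of_hitTimeE_ne_top {ω : ℕ → Ω} (hω : hitTimeE B ω ≠ ⊤) : HitsB B ω := by
  by_contra hmiss
  have hsurvive (n : ℕ) : ∀ m, 1 ≤ m → m ≤ n → ω m ∉ B := fun m h1 _ hm => hmiss ⟨m, h1, hm⟩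
  apply hω
  calc hitTimeE B ω = ∑' _ : ℕ, (1 : ℝ≥0∞) := tsum_congr fun n => if_pos (hsurvive n)
    _ = ⊤ := ENNReal.tsum_const_eq_top_of_ne_zero one_ne_zero

variable [MeasurableSpace Ω]

lemma measurableSet_survivesUntil (hB : MeasurableSet B) (n : ℕ) :
    MeasurableSet (survivesUntil B n) := by
  simp only [survivesUntil, ofPred_forall]
  exact .iInter fun m => .iInter fun _ => .iInter fun _ =>
    (hB.preimage (measurable_pi_apply m)).compl

lemma measurable_hitTimeE (hB : MeasurableSet B) : Measurable (hitTimeE B) := by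
  simp only [funext (hitTimeE_eq_tsum_indicator B)]
  exact .tsum fun n => measurable_one.indicator (measurableSet_survivesUntil hB n)

lemma lintegral_hitTimeE (hB : MeasurableSet B) (P : Measure (ℕ → Ω)) :
    ∫⁻ ω, hitTimeE B ω ∂P = ∑' n, P (survivesUntil B n) := by
  simp only [hitTimeE_eq_tsum_indicator]
  rw [lintegral_tsum fun n =>
    (measurable_one.indicator (measurableSet_survivesUntil hB n)).aemeasurable]
  simp only [lintegral_indicator_one (measurableSet_survivesUntil hB _)]

lemma IsChainLaw.measure_survivesUntil {μ0 : Measure Ω} {ℓ : Kernel Ω Ω} {P : Measure (ℕ → Ω)}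
    (hP : IsChainLaw μ0 ℓ P) (hB : MeasurableSet B) (n : ℕ) :
    P (survivesUntil B n) = killedMarginal B μ0 ℓ n univ := by
  have hproj : Measurable fun (ω : ℕ → Ω) (i : Fin (n + 1)) => ω i :=
    measurable_pi_lambda _ fun i => measurable_pi_apply _
  have hpre : survivesUntil B n = (fun ω (i : Fin (n + 1)) => ω i) ⁻¹' avoidsAfterZero B n := by
    ext ω
    simp only [survivesUntil, avoidsAfterZero, mem_preimage, mem_ofPred_eq]
    exact ⟨fun h i hi => h i hi (Nat.lt_succ_iff.mp i.isLt),
      fun h m h1 h2 => h ⟨m, Nat.lt_succ_of_le h2⟩ h1⟩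
  rw [killedMarginal_apply_univ, ← hP.2 n, Measure.map_apply hproj
    (measurableSet_avoidsAfterZero hB n), hpre]

end HittingTime

theorem finite_unitFlow_hitting_time_general
    {Ω : Type*} [MeasurableSpace Ω]
    (A B : Set Ω) (hA : MeasurableSet A) (hB : MeasurableSet B)
    (Φ : Measure (Ω × Ω)) (hΦ : IsUnitFlow A B Φ) (hfin : Φ univ < ⊤)
    (ℓ : Kernel Ω Ω) (hℓ : IsMarkovKernel ℓ) (hdis : Disintegrates Φ ℓ)
    (P : Measure (ℕ → Ω)) (hP : IsChainLaw (Φ.fst.restrict A) ℓ P) :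
    ∫⁻ ω, hitTimeE B ω ∂P ≤ Φ univ ∧ (∀ᵐ ω ∂P, HitsB B ω) := by
  have hmean : ∫⁻ ω, hitTimeE B ω ∂P ≤ Φ univ := by
    rw [lintegral_hitTimeE hB, ← Measure.fst_univ]
    refine ENNReal.tsum_le_of_sum_range_le fun n => ?_
    have hocc := sum_killedMarginal_le hB
      (fun C hC => hΦ.restrict_add_lintegral_kernel_le hA hB hdis hC) n
    simpa only [hP.measure_survivesUntil hB, Measure.coe_finsetSum, Finset.sum_apply]
      using hocc univ
  refine ⟨hmean, ?_⟩
  filter_upwards [ae_lt_top (measurable_hitTimeE hB) (hmean.trans_lt hfin).ne] with ω hω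
  exact hitsB_of_hitTimeE_ne_top hω.ne

/-- **Finite unit flows have integrable hitting times.** -/
theorem finite_unitFlow_hitting_time
    {Ω : Type*} [MeasurableSpace Ω] [TopologicalSpace Ω] [PolishSpace Ω] [BorelSpace Ω]
    (A B : Set Ω) (hA : MeasurableSet A) (hB : MeasurableSet B) (hAB : Disjoint A B)
    (Φ : Measure (Ω × Ω)) (hΦ : IsUnitFlow A B Φ) (hfin : Φ univ < ⊤)
    (ℓ : Kernel Ω Ω) (hℓ : IsMarkovKernel ℓ) (hdis : Disintegrates Φ ℓ)
    (P : Measure (ℕ → Ω)) (hP : IsChainLaw (Φ.fst.restrict A) ℓ P) :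
    ∫⁻ ω, hitTimeE B ω ∂P ≤ Φ univ ∧ (∀ᵐ ω ∂P, HitsB B ω) :=
  finite_unitFlow_hitting_time_general A B hA hB Φ hΦ hfin ℓ hℓ hdis P hP
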